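/- arXiv:2501.12286 — 5 statements merged into one kernel-verified Lean document; each statement's English description precedes it below -/
import Mathlib

section
/- Let N ≥ 2 and K ≥ 3 be integers and let a : [1,K] → ℝ be a sequence with a(0) := 0 satisfying the recurrence a(s) = (1/(N−1))·(2·a(s+1) + a(s+2)) for all s ∈ [1,K−2]. Then ∑_{s=1}^{K−2} C(K−2,s)·a(s) = (1/N)·∑_{i=1}^{K} C(K,i)·a(i) − (1/N)·(2·a(1) + a(2)). -/
/-!
Write `K = m + 2`. The recurrence says `N a(s) = a(s) + 2 a(s+1) + a(s+2)` for `1 ≤ s ≤ m`, and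
convolving `C(m, ·)` with the coefficients `1, 2, 1` of `(1 + x)²` gives `C(m + 2, ·)`. Summing the
recurrence against `C(m, s)` therefore yields `N` times the left-hand side on one side and
`∑ C(m + 2, i) a(i)` on the other, up to the missing term `s = 0`, which is `2 a(1) + a(2)`
because `a(0) = 0`.
-/

open Finset

theorem sum_range_succ_eq_add_sum_Icc {M : Type*} [AddCommMonoid M] (f : ℕ → M) (n : ℕ) :
    ∑ i ∈ range (n + 1), f i = f 0 + ∑ i ∈ Icc 1 n, f i := by
  rw [sum_range_eq_add_Ico f (by omega), Ico_add_one_right_eq_Icc]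

section BinomialConvolution

variable {R : Type*} [CommSemiring R]

theorem sum_range_choose_succ_mul (m : ℕ) (g : ℕ → R) :
    ∑ i ∈ range (m + 2), ((m + 1).choose i : R) * g i
      = ∑ i ∈ range (m + 1), (m.choose i : R) * (g i + g (i + 1)) := by
  have hshift : ∑ i ∈ range (m + 1), (m.choose (i + 1) : R) * g (i + 1) + g 0
      = ∑ i ∈ range (m + 1), (m.choose i : R) * g i := by
    have h := sum_range_succ' (fun i => (m.choose i : R) * g i) (m + 1)
    rw [sum_range_succ, Nat.choose_succ_self, Nat.cast_zero, zero_mul, add_zero] at h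
    simpa using h.symm
  simp only [sum_range_succ' _ (m + 1), Nat.choose_succ_succ, Nat.cast_add, add_mul,
    sum_add_distrib, mul_add, Nat.choose_zero_right, Nat.cast_one, one_mul]
  rw [← hshift]
  ring

theorem sum_range_choose_add_two_mul (m : ℕ) (g : ℕ → R) :
    ∑ i ∈ range (m + 3), ((m + 2).choose i : R) * g i
      = ∑ s ∈ range (m + 1), (m.choose s : R) * (g s + 2 * g (s + 1) + g (s + 2)) := by
  rw [sum_range_choose_succ_mul (m + 1), sum_range_choose_succ_mul m]
  exact sum_congr rfl fun i _ => by ring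

theorem sum_Icc_choose_add_two_mul_of_eq_zero (m : ℕ) (a : ℕ → R) (ha0 : a 0 = 0) :
    ∑ i ∈ Icc 1 (m + 2), ((m + 2).choose i : R) * a i
      = 2 * a 1 + a 2
        + ∑ s ∈ Icc 1 m, (m.choose s : R) * (a s + 2 * a (s + 1) + a (s + 2)) := by
  have h := sum_range_choose_add_two_mul m a
  rw [sum_range_succ_eq_add_sum_Icc, sum_range_succ_eq_add_sum_Icc] at h
  simpa [ha0] using h

end BinomialConvolution

theorem stmt_5 (N K : ℕ) (hN : 2 ≤ N) (hK : 3 ≤ K)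
    (a : ℕ → ℝ) (ha0 : a 0 = 0)
    (hrec : ∀ s ∈ Finset.Icc 1 (K - 2),
      a s = (1 / ((N : ℝ) - 1)) * (2 * a (s + 1) + a (s + 2))) :
    ∑ s ∈ Finset.Icc 1 (K - 2), ((K - 2).choose s : ℝ) * a s
      = (1 / (N : ℝ)) * ∑ i ∈ Finset.Icc 1 K, (K.choose i : ℝ) * a i
        - (1 / (N : ℝ)) * (2 * a 1 + a 2) := by
  obtain ⟨m, rfl⟩ : ∃ m, K = m + 2 := ⟨K - 2, by omega⟩
  rw [Nat.add_sub_cancel] at hrec ⊢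
  have hN2 : (2 : ℝ) ≤ N := by exact_mod_cast hN
  have hN1 : (N : ℝ) - 1 ≠ 0 := by linarith
  have hstep : ∀ s ∈ Icc 1 m, (m.choose s : ℝ) * (a s + 2 * a (s + 1) + a (s + 2))
      = N * ((m.choose s : ℝ) * a s) := by
    intro s hs
    have h := hrec s hs
    field_simp at h
    linear_combination -(m.choose s : ℝ) * h
  rw [sum_Icc_choose_add_two_mul_of_eq_zero m a ha0, sum_congr rfl hstep, ← mul_sum]
  field_simp
  ring
end

section
/- Let N ≥ 2 and K ≥ 2 be integers, r₁ = (1+√N)/(N−1), r₂ = (1−√N)/(N−1), and define α_s = (r₁^{K−s} − r₂^{K−s})/(r₁−r₂) and β_s = (N−1)(r₁^{K−s+1}r₂² − r₁²r₂^{K−s+1})/(r₁−r₂) for s ∈ [1,K]. Then for every i ∈ [1,K], α₁β_i − α_iβ₁ = (1/(1−N))^{K−i} · α_{K−i+1}. -/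
lemma key_identity (a b : ℝ) (m t : ℕ) :
    (a ^ (m + t) - b ^ (m + t)) * (a ^ (m + 1) * b ^ 2 - a ^ 2 * b ^ (m + 1)) -
      (a ^ m - b ^ m) * (a ^ (m + t + 1) * b ^ 2 - a ^ 2 * b ^ (m + t + 1)) =
    -((a * b) ^ (m + 1)) * (a - b) * (a ^ t - b ^ t) := by
  simp only [pow_add, pow_succ, mul_pow]
  ring

theorem stmt_7 (N K : ℕ) (hN : 2 ≤ N) (hK : 2 ≤ K)
    (r₁ r₂ : ℝ)
    (hr₁ : r₁ = (1 + Real.sqrt N) / ((N : ℝ) - 1))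
    (hr₂ : r₂ = (1 - Real.sqrt N) / ((N : ℝ) - 1))
    (α β : ℕ → ℝ)
    (hα : ∀ s ∈ Finset.Icc 1 K, α s = (r₁ ^ (K - s) - r₂ ^ (K - s)) / (r₁ - r₂))
    (hβ : ∀ s ∈ Finset.Icc 1 K,
      β s = ((N : ℝ) - 1) * (r₁ ^ (K - s + 1) * r₂ ^ 2 - r₁ ^ 2 * r₂ ^ (K - s + 1)) / (r₁ - r₂)) :
    ∀ i ∈ Finset.Icc 1 K,
      α 1 * β i - α i * β 1 = (1 / (1 - (N : ℝ))) ^ (K - i) * α (K - i + 1) := by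
  intro i hi
  obtain ⟨h1, h2⟩ := Finset.mem_Icc.mp hi
  have hN1 : (1:ℝ) < (N : ℝ) := by exact_mod_cast Nat.lt_of_lt_of_le one_lt_two hN
  have hC : (N : ℝ) - 1 ≠ 0 := by linarith
  have hC' : (1 : ℝ) - (N : ℝ) ≠ 0 := by linarith
  have hs : Real.sqrt N * Real.sqrt N = N := Real.mul_self_sqrt (by positivity)
  have hspos : 0 < Real.sqrt N := Real.sqrt_pos.mpr (by positivity)
  have hd : r₁ - r₂ ≠ 0 := by
    rw [hr₁, hr₂]
    rw [div_sub_div_same]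
    have : (1 + Real.sqrt N) - (1 - Real.sqrt N) = 2 * Real.sqrt N := by ring
    rw [this]
    exact div_ne_zero (by positivity) hC
  have hab : r₁ * r₂ = 1 / (1 - (N : ℝ)) := by
    rw [hr₁, hr₂, div_mul_div_comm]
    rw [div_eq_div_iff (by positivity) hC']
    nlinarith [hs]
  have habC : ((N : ℝ) - 1) * (r₁ * r₂) = -1 := by
    rw [hab]; field_simp; ring
  -- memberships
  have hm1 : (1 : ℕ) ∈ Finset.Icc 1 K := Finset.mem_Icc.mpr ⟨le_refl 1, by omega⟩
  have hmK : K - i + 1 ∈ Finset.Icc 1 K := Finset.mem_Icc.mpr ⟨by omega, by omega⟩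
  rw [hα 1 hm1, hα i hi, hβ i hi, hβ 1 hm1, hα (K - i + 1) hmK]
  have e1 : K - 1 = (K - i) + (i - 1) := by omega
  have e2 : K - (K - i + 1) = i - 1 := by omega
  rw [e1, e2]
  set m := K - i with hm
  set t := i - 1 with ht
  set a := r₁
  set b := r₂
  rw [← hab]
  have hkey := key_identity a b m t
  field_simp
  linear_combination ((N:ℝ) - 1) * hkey -
    (a - b) * (a * b) ^ m * (a ^ t - b ^ t) * habC
end

section
/- Let N ≥ 2 and K ≥ 2 be integers, r₁ = (1+√N)/(N−1), r₂ = (1−√N)/(N−1), and define α_s = (r₁^{K−s} − r₂^{K−s})/(r₁−r₂) and β_s = (N−1)(r₁^{K−s+1}r₂² − r₁²r₂^{K−s+1})/(r₁−r₂) for s ∈ [1,K]. Then for every i ∈ [1,K], α_iβ₂ − α₂β_i = (1/(1−N))^{K−i−1} · β_{K−i+1}, where β_{K−i+1} = (r₁r₂^{i−1} − r₁^{i−1}r₂)/(r₁−r₂). -/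
theorem stmt_8 (N K : ℕ) (hN : 2 ≤ N) (hK : 2 ≤ K)
    (r₁ r₂ : ℝ)
    (hr₁ : r₁ = (1 + Real.sqrt N) / ((N : ℝ) - 1))
    (hr₂ : r₂ = (1 - Real.sqrt N) / ((N : ℝ) - 1))
    (α β : ℕ → ℝ)
    (hα : ∀ s ∈ Finset.Icc 1 K, α s = (r₁ ^ (K - s) - r₂ ^ (K - s)) / (r₁ - r₂))
    (hβ : ∀ s ∈ Finset.Icc 1 K,
      β s = ((N : ℝ) - 1) * (r₁ ^ (K - s + 1) * r₂ ^ 2 - r₁ ^ 2 * r₂ ^ (K - s + 1)) / (r₁ - r₂)) :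
    ∀ i ∈ Finset.Icc 1 K,
      α i * β 2 - α 2 * β i = (1 / (1 - (N : ℝ))) ^ ((K : ℤ) - i - 1) * β (K - i + 1) ∧
      β (K - i + 1) = (r₁ * r₂ ^ (i - 1) - r₁ ^ (i - 1) * r₂) / (r₁ - r₂) := by
  have hN1 : (1 : ℝ) < (N : ℝ) := by exact_mod_cast Nat.lt_of_lt_of_le one_lt_two hN
  have hN0 : ((N : ℝ) - 1) ≠ 0 := by linarith
  have hs : Real.sqrt N ^ 2 = (N : ℝ) := Real.sq_sqrt (by positivity)
  have h1s : 1 < Real.sqrt N := by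
    rw [show (1:ℝ) = Real.sqrt 1 from (Real.sqrt_one).symm]
    exact Real.sqrt_lt_sqrt (by norm_num) hN1
  have hr1ne : r₁ ≠ 0 := by
    rw [hr₁]; exact div_ne_zero (by linarith) hN0
  have hr2ne : r₂ ≠ 0 := by
    rw [hr₂]; exact div_ne_zero (by linarith) hN0
  have hdne : r₁ - r₂ ≠ 0 := by
    rw [hr₁, hr₂]
    rw [div_sub_div_same]
    have : (1 + Real.sqrt N) - (1 - Real.sqrt N) = 2 * Real.sqrt N := by ring
    rw [this]
    exact div_ne_zero (by linarith) hN0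
  have hN1' : (1 : ℝ) - (N : ℝ) ≠ 0 := by linarith
  have hprod : r₁ * r₂ = 1 / (1 - (N : ℝ)) := by
    rw [hr₁, hr₂]
    field_simp
    linear_combination ((N:ℝ) - 1) * hs
  have hc : ((N : ℝ) - 1) = -(r₁ * r₂)⁻¹ := by
    rw [hprod]; field_simp; ring
  intro i hi
  simp only [Finset.mem_Icc] at hi
  obtain ⟨hi1, hiK⟩ := hi
  -- values of β (K - i + 1)
  have hmem : K - i + 1 ∈ Finset.Icc 1 K := by simp [Finset.mem_Icc]; omega
  have hexp : K - (K - i + 1) + 1 = i := by omega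
  have hβK : β (K - i + 1) = ((N : ℝ) - 1) * (r₁ ^ i * r₂ ^ 2 - r₁ ^ 2 * r₂ ^ i) / (r₁ - r₂) := by
    rw [hβ _ hmem, hexp]
  have hri1 : r₁ ^ (i - 1) = r₁ ^ i / r₁ := by
    rw [eq_div_iff hr1ne, ← pow_succ]; congr 1; omega
  have hri2 : r₂ ^ (i - 1) = r₂ ^ i / r₂ := by
    rw [eq_div_iff hr2ne, ← pow_succ]; congr 1; omega
  have part2 : β (K - i + 1) = (r₁ * r₂ ^ (i - 1) - r₁ ^ (i - 1) * r₂) / (r₁ - r₂) := by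
    rw [hβK, hri1, hri2, hc]
    rw [div_eq_div_iff hdne hdne]
    field_simp
    ring
  refine ⟨?_, part2⟩
  -- main identity
  have hmi : i ∈ Finset.Icc 1 K := by simp [Finset.mem_Icc]; omega
  have hm2 : (2:ℕ) ∈ Finset.Icc 1 K := by simp [Finset.mem_Icc]; omega
  rw [hα _ hmi, hα _ hm2, hβ _ hmi, hβ _ hm2, part2, hc]
  have hKi : r₁ ^ (K - i) = r₁ ^ K / r₁ ^ i := by
    rw [eq_div_iff (pow_ne_zero _ hr1ne), ← pow_add]; congr 1; omega
  have hKi' : r₂ ^ (K - i) = r₂ ^ K / r₂ ^ i := by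
    rw [eq_div_iff (pow_ne_zero _ hr2ne), ← pow_add]; congr 1; omega
  have hK2 : r₁ ^ (K - 2) = r₁ ^ K / r₁ ^ 2 := by
    rw [eq_div_iff (pow_ne_zero _ hr1ne), ← pow_add]; congr 1; omega
  have hK2' : r₂ ^ (K - 2) = r₂ ^ K / r₂ ^ 2 := by
    rw [eq_div_iff (pow_ne_zero _ hr2ne), ← pow_add]; congr 1; omega
  have hKi1 : r₁ ^ (K - i + 1) = r₁ ^ K / r₁ ^ i * r₁ := by
    rw [pow_succ, hKi]
  have hKi1' : r₂ ^ (K - i + 1) = r₂ ^ K / r₂ ^ i * r₂ := by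
    rw [pow_succ, hKi']
  have hK21 : r₁ ^ (K - 2 + 1) = r₁ ^ K / r₁ ^ 2 * r₁ := by
    rw [pow_succ, hK2]
  have hK21' : r₂ ^ (K - 2 + 1) = r₂ ^ K / r₂ ^ 2 * r₂ := by
    rw [pow_succ, hK2']
  have hz : (1 / (1 - (N : ℝ))) ^ ((K : ℤ) - i - 1)
      = (r₁ ^ K * r₂ ^ K) / (r₁ ^ i * r₂ ^ i) / (r₁ * r₂) := by
    rw [← hprod, zpow_sub₀ (by rw [hprod]; exact one_div_ne_zero hN1'),
      zpow_sub₀ (by rw [hprod]; exact one_div_ne_zero hN1'),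
      zpow_one, zpow_natCast, zpow_natCast, mul_pow, mul_pow]
  rw [hz, hri1, hri2, hKi, hKi', hK2, hK2', hKi1, hKi1', hK21, hK21']
  have h1i : r₁ ^ i ≠ 0 := pow_ne_zero _ hr1ne
  have h2i : r₂ ^ i ≠ 0 := pow_ne_zero _ hr2ne
  field_simp
  ring
end

section
/- Let N ≥ 2 and K ≥ 3 be integers, r₁ = (1+√N)/(N−1), r₂ = (1−√N)/(N−1), and define α_s = (r₁^{K−s} − r₂^{K−s})/(r₁−r₂) and β_s = (N−1)(r₁^{K−s+1}r₂² − r₁²r₂^{K−s+1})/(r₁−r₂) for s ∈ [1,K]. Then ∑_{i=1}^{K} C(K,i)·[(α₁β_i − α_iβ₁) − (1/2)(α_iβ₂ − α₂β_i)] = ((N−1)²/(4√N))·(√N/(N−1))^K·(1 − (−1)^K). -/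
set_option maxHeartbeats 2000000 in
theorem stmt_12 (N K : ℕ) (hN : 2 ≤ N) (hK : 3 ≤ K)
    (r₁ r₂ : ℝ)
    (hr₁ : r₁ = (1 + Real.sqrt N) / ((N : ℝ) - 1))
    (hr₂ : r₂ = (1 - Real.sqrt N) / ((N : ℝ) - 1))
    (α β : ℕ → ℝ)
    (hα : ∀ s ∈ Finset.Icc 1 K, α s = (r₁ ^ (K - s) - r₂ ^ (K - s)) / (r₁ - r₂))
    (hβ : ∀ s ∈ Finset.Icc 1 K,
      β s = ((N : ℝ) - 1) * (r₁ ^ (K - s + 1) * r₂ ^ 2 - r₁ ^ 2 * r₂ ^ (K - s + 1)) / (r₁ - r₂)) :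
    ∑ i ∈ Finset.Icc 1 K, (K.choose i : ℝ) *
        ((α 1 * β i - α i * β 1) - (1 / 2) * (α i * β 2 - α 2 * β i))
      = (((N : ℝ) - 1) ^ 2 / (4 * Real.sqrt N)) * (Real.sqrt N / ((N : ℝ) - 1)) ^ K
          * (1 - (-1 : ℝ) ^ K) := by
  have hN2 : (2:ℝ) ≤ (N:ℝ) := by exact_mod_cast hN
  have hNpos : (0:ℝ) < (N:ℝ) - 1 := by linarith
  have hNe : (N:ℝ) - 1 ≠ 0 := ne_of_gt hNpos
  set x := Real.sqrt (N:ℝ) with hxdef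
  have hx2 : x ^ 2 = (N:ℝ) := Real.sq_sqrt (by linarith)
  have hx1 : 1 < x := by nlinarith [Real.sqrt_nonneg (N:ℝ)]
  have hx0 : (0:ℝ) < x := by linarith
  have hr1ne : r₁ ≠ 0 := by rw [hr₁]; exact div_ne_zero (by linarith) hNe
  have hr2ne : r₂ ≠ 0 := by
    rw [hr₂]; exact div_ne_zero (by intro h; nlinarith) hNe
  have hDeq : r₁ - r₂ = 2*x/((N:ℝ)-1) := by rw [hr₁, hr₂]; ring
  have hDne : r₁ - r₂ ≠ 0 := by rw [hDeq]; exact div_ne_zero (by linarith) hNe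
  have key : ∀ r : ℝ, ∑ i ∈ Finset.Icc 1 K, (K.choose i : ℝ) * r ^ (K - i)
      = (1 + r)^K - r^K := by
    intro r
    have hbin : (1 + r)^K = ∑ k ∈ Finset.range (K+1), (K.choose k : ℝ) * r^(K-k) := by
      rw [add_pow]
      refine Finset.sum_congr rfl ?_
      intro k _
      ring
    have hIcc : Finset.Icc 1 K = (Finset.range (K+1)).erase 0 := by
      ext j; simp [Nat.lt_succ_iff]; omega
    rw [hIcc, Finset.sum_erase_eq_sub (by simp), ← hbin]
    simp
  have step : ∀ i ∈ Finset.Icc 1 K,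
      (K.choose i : ℝ) * ((α 1 * β i - α i * β 1) - (1/2) * (α i * β 2 - α 2 * β i))
      = ((α 1 + (1/2)*α 2) * (((N:ℝ)-1)*r₁*r₂^2) - (β 1 + (1/2)*β 2))/(r₁ - r₂)
          * ((K.choose i : ℝ) * r₁^(K-i))
        + ((β 1 + (1/2)*β 2) - (α 1 + (1/2)*α 2) * (((N:ℝ)-1)*r₁^2*r₂))/(r₁ - r₂)
          * ((K.choose i : ℝ) * r₂^(K-i)) := by
    intro i hi
    rw [hα i hi, hβ i hi]
    simp only [pow_succ]
    field_simp
    ring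
  rw [Finset.sum_congr rfl step, Finset.sum_add_distrib, ← Finset.mul_sum, ← Finset.mul_sum,
      key r₁, key r₂]
  have h1 : (1:ℕ) ∈ Finset.Icc 1 K := by simp; omega
  have h2 : (2:ℕ) ∈ Finset.Icc 1 K := by simp [Finset.mem_Icc]; omega
  have hx1r1 : 1 + r₁ = x * r₁ := by
    rw [hr₁]; field_simp; linear_combination -hx2
  have hx2r2 : 1 + r₂ = -(x * r₂) := by
    rw [hr₂]; field_simp; linear_combination -hx2
  have hprod : ((N:ℝ)-1) * (r₁ * r₂) = -1 := by
    rw [hr₁, hr₂]; field_simp; linear_combination (-1:ℝ) * hx2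
  have pK1 : r₁^K = r₁^(K-2) * r₁^2 := by rw [← pow_add]; congr 1; omega
  have pK2 : r₂^K = r₂^(K-2) * r₂^2 := by rw [← pow_add]; congr 1; omega
  have pK1' : r₁^(K-1) = r₁^(K-2) * r₁ := by rw [← pow_succ]; congr 1; omega
  have pK2' : r₂^(K-1) = r₂^(K-2) * r₂ := by rw [← pow_succ]; congr 1; omega
  have pNK : ((N:ℝ)-1)^K = ((N:ℝ)-1)^(K-2) * ((N:ℝ)-1)^2 := by
    rw [← pow_add]; congr 1; omega
  have hMM : ((N:ℝ)-1)^(K-2) * (r₁^(K-2) * r₂^(K-2)) = (-1:ℝ)^(K-2) := by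
    rw [← mul_pow, ← mul_pow, hprod]
  have hE : (-1:ℝ)^K = (-1:ℝ)^(K-2) := by
    conv_lhs => rw [show K = (K-2)+2 from by omega]
    rw [pow_add]; norm_num
  rw [← hE] at hMM
  have hP1ne : r₁^(K-2) ≠ 0 := pow_ne_zero _ hr1ne
  have hP2ne : r₂^(K-2) ≠ 0 := pow_ne_zero _ hr2ne
  have hMval : ((N:ℝ)-1)^(K-2) = (-1:ℝ)^K / (r₁^(K-2) * r₂^(K-2)) := by
    rw [eq_div_iff (mul_ne_zero hP1ne hP2ne)]; linear_combination hMM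
  have hA' : (α 1 + (1/2)*α 2) * (((N:ℝ)-1)*r₁*r₂^2) - (β 1 + (1/2)*β 2)
      = -(r₂^(K-2)*(r₂ + 1/2)) := by
    rw [hα 1 h1, hα 2 h2, hβ 1 h1, hβ 2 h2]
    simp only [pow_succ]
    rw [pK1', pK2']
    generalize r₁ ^ (K-2) = P1
    generalize r₂ ^ (K-2) = P2
    rw [hr₁, hr₂, ← hx2]
    have h1x : (1:ℝ) + x ≠ 0 := by nlinarith
    have h1x' : (1:ℝ) - x ≠ 0 := by nlinarith
    have hx21 : x^2 - 1 ≠ 0 := by nlinarith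
    field_simp [hx0.ne']
    ring
  have hB' : (β 1 + (1/2)*β 2) - (α 1 + (1/2)*α 2) * (((N:ℝ)-1)*r₁^2*r₂)
      = r₁^(K-2)*(r₁ + 1/2) := by
    rw [hα 1 h1, hα 2 h2, hβ 1 h1, hβ 2 h2]
    simp only [pow_succ]
    rw [pK1', pK2']
    generalize r₁ ^ (K-2) = P1
    generalize r₂ ^ (K-2) = P2
    rw [hr₁, hr₂, ← hx2]
    have h1x : (1:ℝ) + x ≠ 0 := by nlinarith
    have h1x' : (1:ℝ) - x ≠ 0 := by nlinarith
    have hx21 : x^2 - 1 ≠ 0 := by nlinarith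
    field_simp [hx0.ne']
    ring
  have hx21' : x^2 - 1 ≠ 0 := by nlinarith
  have hq1 : (r₁ + 1/2) * r₂^2 = 1/(2*((N:ℝ)-1)) := by
    rw [hr₁, hr₂, ← hx2]; field_simp; ring
  have hq2 : (r₂ + 1/2) * r₁^2 = 1/(2*((N:ℝ)-1)) := by
    rw [hr₁, hr₂, ← hx2]; field_simp; ring
  rw [hA', hB', hx1r1, hx2r2, mul_pow, neg_pow, mul_pow, pK1, pK2, div_pow, pNK, hMval]
  have h1x : (1:ℝ) + x ≠ 0 := by nlinarith
  have h1x' : (1:ℝ) - x ≠ 0 := by nlinarith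
  have hx21 : x^2 - 1 ≠ 0 := by nlinarith
  rcases Nat.even_or_odd K with he | ho
  · rw [he.neg_one_pow]
    generalize hg1 : r₁ ^ (K-2) = P1 at hP1ne ⊢
    generalize hg2 : r₂ ^ (K-2) = P2 at hP2ne ⊢
    generalize hg3 : x ^ K = X
    rw [hr₁, hr₂, ← hx2]
    field_simp
    ring
  · rw [ho.neg_one_pow]
    generalize hg1 : r₁ ^ (K-2) = P1 at hP1ne ⊢
    generalize hg2 : r₂ ^ (K-2) = P2 at hP2ne ⊢
    generalize hg3 : x ^ K = X
    rw [hr₁, hr₂, ← hx2]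
    field_simp [hx0.ne']
    ring
end

section
/- Let N ≥ 2 and K ≥ 3 be integers, r₁ = (1+√N)/(N−1), r₂ = (1−√N)/(N−1), α_s = (r₁^{K−s} − r₂^{K−s})/(r₁−r₂) and β_s = (N−1)(r₁^{K−s+1}r₂² − r₁²r₂^{K−s+1})/(r₁−r₂) for s ∈ [1,K]. If K is odd, then ∑_{i=1}^{K} C(K,i)·[(α₁β_i − α_iβ₁) − (1/2)(α_iβ₂ − α₂β_i)] > 0, and if K is even this sum equals 0. -/
theorem frac_aux (d : ℝ) (hd : d ≠ 0) (a b c e f g n : ℝ)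
    (h : a*b - c*e - (1/2)*(c*f - g*b) = d * n) :
    (a/d)*(b/d) - (c/d)*(e/d) - (1/2)*((c/d)*(f/d) - (g/d)*(b/d)) = n/d := by
  field_simp
  linear_combination 2 * h

theorem binom_aux (K : ℕ) (r : ℝ) :
    ∑ i ∈ Finset.Icc 1 K, (K.choose i : ℝ) * r^(K-i) = (1+r)^K - r^K := by
  have h := add_pow (1:ℝ) r K
  have hr : Finset.range (K+1) = insert 0 (Finset.Icc 1 K) := by
    ext x; simp [Finset.mem_Icc]; omega
  rw [hr, Finset.sum_insert (by simp)] at h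
  simp only [pow_zero, one_mul, Nat.sub_zero, Nat.choose_zero_right, Nat.cast_one, mul_one,
    one_pow] at h
  rw [h]
  rw [add_sub_cancel_left]
  exact Finset.sum_congr rfl fun i _ => by ring

theorem stmt_13 (N K : ℕ) (hN : 2 ≤ N) (hK : 3 ≤ K)
    (r₁ r₂ : ℝ)
    (hr₁ : r₁ = (1 + Real.sqrt N) / ((N : ℝ) - 1))
    (hr₂ : r₂ = (1 - Real.sqrt N) / ((N : ℝ) - 1))
    (α β : ℕ → ℝ)
    (hα : ∀ s ∈ Finset.Icc 1 K, α s = (r₁ ^ (K - s) - r₂ ^ (K - s)) / (r₁ - r₂))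
    (hβ : ∀ s ∈ Finset.Icc 1 K,
      β s = ((N : ℝ) - 1) * (r₁ ^ (K - s + 1) * r₂ ^ 2 - r₁ ^ 2 * r₂ ^ (K - s + 1)) / (r₁ - r₂)) :
    (Odd K → 0 < ∑ i ∈ Finset.Icc 1 K, (K.choose i : ℝ) *
        ((α 1 * β i - α i * β 1) - (1 / 2) * (α i * β 2 - α 2 * β i))) ∧
    (Even K → ∑ i ∈ Finset.Icc 1 K, (K.choose i : ℝ) *
        ((α 1 * β i - α i * β 1) - (1 / 2) * (α i * β 2 - α 2 * β i)) = 0) := by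
  have hN1 : (1:ℝ) < (N:ℝ) := by exact_mod_cast Nat.lt_of_lt_of_le one_lt_two hN
  have hNne : (N:ℝ) - 1 ≠ 0 := by linarith
  set s := Real.sqrt (N:ℝ) with hs
  have hs2 : s^2 = (N:ℝ) := Real.sq_sqrt (by positivity)
  have hs1 : 1 < s := by nlinarith [Real.sqrt_nonneg (N:ℝ)]
  have hr1pos : 0 < r₁ := by rw [hr₁]; apply div_pos <;> linarith
  have hr2neg : r₂ < 0 := by rw [hr₂]; apply div_neg_of_neg_of_pos <;> linarith
  have hdpos : 0 < r₁ - r₂ := by linarith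
  have hdne : r₁ - r₂ ≠ 0 := ne_of_gt hdpos
  have hq : ((N:ℝ)-1) * (r₁*r₂) = -1 := by
    rw [hr₁, hr₂]; field_simp; linear_combination (-1:ℝ)*hs2
  have hp : ((N:ℝ)-1) * (r₁+r₂) = 2 := by
    rw [hr₁, hr₂]; field_simp; ring
  have h1 : (1:ℝ) + r₁ = s * r₁ := by
    rw [hr₁]; field_simp; linear_combination (-1:ℝ)*hs2
  have h2 : (1:ℝ) + r₂ = -s * r₂ := by
    rw [hr₂]; field_simp; linear_combination (-1:ℝ)*hs2
  have hz : (r₁ + 1/2)*r₂^2 = (r₂ + 1/2)*r₁^2 := by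
    have h0 : ((N:ℝ)-1) * (r₁*r₂ + (r₁+r₂)/2) = 0 := by linear_combination hq + hp/2
    have h0' : r₁*r₂ + (r₁+r₂)/2 = 0 := by
      rcases mul_eq_zero.1 h0 with h | h
      · exact absurd h hNne
      · exact h
    linear_combination (r₂ - r₁) * h0'
  have key : ∀ i ∈ Finset.Icc 1 K,
      (α 1 * β i - α i * β 1) - (1/2)*(α i * β 2 - α 2 * β i)
      = (r₂^(K-i) * (r₁^(K-2) * (r₁ + 1/2)) - r₁^(K-i) * (r₂^(K-2) * (r₂ + 1/2))) / (r₁-r₂) := by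
    intro i hi
    rw [Finset.mem_Icc] at hi
    have m1 : 1 ∈ Finset.Icc 1 K := by simp [Finset.mem_Icc]; omega
    have m2 : 2 ∈ Finset.Icc 1 K := by simp [Finset.mem_Icc]; omega
    have mi : i ∈ Finset.Icc 1 K := by simp [Finset.mem_Icc]; omega
    rw [hα 1 m1, hα 2 m2, hα i mi, hβ 1 m1, hβ 2 m2, hβ i mi,
      show K - 1 = K - 2 + 1 from by omega,
      pow_succ r₁ (K-2+1), pow_succ r₂ (K-2+1),
      pow_succ r₁ (K-2), pow_succ r₂ (K-2),
      pow_succ r₁ (K-i), pow_succ r₂ (K-i)]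
    have hpoly : (r₁^(K-2)*r₁ - r₂^(K-2)*r₂) * (((N:ℝ)-1)*(r₁^(K-i)*r₁*r₂^2 - r₁^2*(r₂^(K-i)*r₂))) - (r₁^(K-i)-r₂^(K-i)) * (((N:ℝ)-1)*(r₁^(K-2)*r₁*r₁*r₂^2 - r₁^2*(r₂^(K-2)*r₂*r₂))) - (1/2)*((r₁^(K-i)-r₂^(K-i)) * (((N:ℝ)-1)*(r₁^(K-2)*r₁*r₂^2 - r₁^2*(r₂^(K-2)*r₂))) - (r₁^(K-2)-r₂^(K-2)) * (((N:ℝ)-1)*(r₁^(K-i)*r₁*r₂^2 - r₁^2*(r₂^(K-i)*r₂)))) = (r₁-r₂) * (r₂^(K-i)*(r₁^(K-2)*(r₁+1/2)) - r₁^(K-i)*(r₂^(K-2)*(r₂+1/2))) := by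
      linear_combination ((r₁-r₂)*(r₁^(K-i)*r₂^(K-2)*r₂ - r₁^(K-2)*r₁*r₂^(K-i) + (r₁^(K-i)*r₂^(K-2) - r₁^(K-2)*r₂^(K-i))/2)) * hq
    exact frac_aux (r₁-r₂) hdne _ _ _ _ _ _ _ hpoly
  have hsum : ∑ i ∈ Finset.Icc 1 K, (K.choose i : ℝ) *
        ((α 1 * β i - α i * β 1) - (1 / 2) * (α i * β 2 - α 2 * β i))
      = (r₁^(K-2)*(r₁+1/2) * ((1+r₂)^K - r₂^K)
          - r₂^(K-2)*(r₂+1/2) * ((1+r₁)^K - r₁^K)) / (r₁-r₂) := by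
    rw [Finset.sum_congr rfl (fun i hi => by rw [key i hi])]
    calc ∑ i ∈ Finset.Icc 1 K, (K.choose i : ℝ) *
          ((r₂^(K-i) * (r₁^(K-2) * (r₁ + 1/2)) - r₁^(K-i) * (r₂^(K-2) * (r₂ + 1/2))) / (r₁-r₂))
        = ∑ i ∈ Finset.Icc 1 K, (((K.choose i : ℝ) * r₂^(K-i)) * ((r₁^(K-2) * (r₁ + 1/2))/(r₁-r₂))
            - ((K.choose i : ℝ) * r₁^(K-i)) * ((r₂^(K-2) * (r₂ + 1/2))/(r₁-r₂))) :=
          Finset.sum_congr rfl fun i _ => by ring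
      _ = (∑ i ∈ Finset.Icc 1 K, (K.choose i : ℝ) * r₂^(K-i)) * ((r₁^(K-2) * (r₁ + 1/2))/(r₁-r₂))
            - (∑ i ∈ Finset.Icc 1 K, (K.choose i : ℝ) * r₁^(K-i)) * ((r₂^(K-2) * (r₂ + 1/2))/(r₁-r₂)) := by
          rw [Finset.sum_sub_distrib, ← Finset.sum_mul, ← Finset.sum_mul]
      _ = _ := by rw [binom_aux K r₁, binom_aux K r₂]; ring
  have hK1 : r₁^K = r₁^(K-2) * r₁^2 := by rw [← pow_add]; congr 1; omega
  have hK2 : r₂^K = r₂^(K-2) * r₂^2 := by rw [← pow_add]; congr 1; omega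
  constructor
  · intro hodd
    rw [hsum, h1, h2, mul_pow, mul_pow, hodd.neg_pow, hK1, hK2]
    have hnum : r₁^(K-2)*(r₁+1/2) * (-s^K * (r₂^(K-2) * r₂^2) - r₂^(K-2) * r₂^2)
          - r₂^(K-2)*(r₂+1/2) * (s^K * (r₁^(K-2) * r₁^2) - r₁^(K-2) * r₁^2)
        = (r₁^(K-2) * (-(r₂^(K-2)))) * (2*(r₁+1/2)*r₂^2*s^K) := by
      linear_combination (r₁^(K-2)*r₂^(K-2)*(s^K - 1)) * hz
    rw [hnum]
    apply div_pos _ hdpos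
    have hQ : r₂^(K-2) < 0 := by
      have : Odd (K-2) := by
        rcases hodd with ⟨m, hm⟩; exact ⟨m-1, by omega⟩
      exact this.pow_neg hr2neg
    have hP : 0 < r₁^(K-2) := pow_pos hr1pos _
    have hs0 : 0 < s := lt_trans one_pos hs1
    apply mul_pos (mul_pos hP (by linarith))
    have : r₂^2 > 0 := pow_pos (by nlinarith : (0:ℝ) < -r₂) 2 |>.trans_le (by nlinarith [sq_nonneg r₂])
    positivity
  · intro heven
    rw [hsum, h1, h2, mul_pow, mul_pow, heven.neg_pow, hK1, hK2]
    rw [div_eq_zero_iff]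
    left
    linear_combination (r₁^(K-2)*r₂^(K-2)*(s^K - 1)) * hz
end
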